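/- arXiv:1104.3380 — 3 statements merged into one kernel-verified Lean document; each statement's English description precedes it below -/
import Mathlib

section
/- Every 𝒮-linear operator L : 𝒮'(ℝⁿ) → 𝒮'(ℝᵐ) is linear: for all scalars a, b and tempered distributions u, w ∈ 𝒮'(ℝⁿ), L(au + bw) = aL(u) + bL(w). -/
/-!
The Dirac family `p ↦ δ_p` is a Schwartz family whose associated operator is the identity, and
every `u` is the superposition `u = u ∘ δ̂`. Applying 𝒮-linearity to the Dirac family therefore
gives one continuous linear `T : 𝒮(ℝᵐ) → 𝒮(ℝⁿ)` with `L u = u ∘ T` for every `u`: `L` is the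
transpose of `T`, hence linear.
-/

open SchwartzMap

/-- The Schwartz test function space `𝒮(ℝⁿ)`. -/
abbrev TestF (n : ℕ) := SchwartzMap (EuclideanSpace ℝ (Fin n)) ℝ

/-- The space of tempered distributions `𝒮'(ℝⁿ)`. -/
abbrev TempDist (n : ℕ) := TestF n →L[ℝ] ℝ

/-- An operator `L : 𝒮'(ℝⁿ) → 𝒮'(ℝᵐ)` (a priori just a function) is `𝒮`-linear
if for every `k` and every Schwartz family `v : ℝᵏ → 𝒮'(ℝⁿ)` with associated
operator `vh` (`vh φ p = v p φ`), the image family `L ∘ v` is again a Schwartz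
family — i.e. it has an associated operator `Lvh` with `Lvh ψ p = L (v p) ψ` —
and for every coefficient distribution `a ∈ 𝒮'(ℝᵏ)` the superposition identity
`L (a ∘ v̂) = a ∘ (L∘v)̂` holds. -/
def IsSLinear {n m : ℕ} (L : TempDist n → TempDist m) : Prop :=
  ∀ (k : ℕ) (v : EuclideanSpace ℝ (Fin k) → TempDist n)
    (vh : TestF n →L[ℝ] TestF k), (∀ (φ : TestF n) p, vh φ p = v p φ) →
    ∃ Lvh : TestF m →L[ℝ] TestF k,
      (∀ (ψ : TestF m) p, Lvh ψ p = L (v p) ψ) ∧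
      ∀ a : TempDist k, L (a.comp vh) = a.comp Lvh

noncomputable def diracFamily (n : ℕ) (p : EuclideanSpace ℝ (Fin n)) : TempDist n :=
  (BoundedContinuousFunction.evalCLM ℝ p).comp (toBoundedContinuousFunctionCLM ℝ _ ℝ)

theorem diracFamily_apply {n : ℕ} (p : EuclideanSpace ℝ (Fin n)) (φ : TestF n) :
    diracFamily n p φ = φ p :=
  rfl

theorem IsSLinear.exists_eq_comp {n m : ℕ} {L : TempDist n → TempDist m} (hL : IsSLinear L) :
    ∃ T : TestF m →L[ℝ] TestF n, ∀ u, L u = u.comp T := by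
  obtain ⟨T, -, hT⟩ := hL n (diracFamily n) (.id ℝ _) fun φ p => (diracFamily_apply p φ).symm
  exact ⟨T, fun u => by simpa only [ContinuousLinearMap.comp_id] using hT u⟩

/-- Every 𝒮-linear operator is linear. -/
theorem isSLinear_linear {n m : ℕ} (L : TempDist n → TempDist m)
    (hL : IsSLinear L) (a b : ℝ) (u w : TempDist n) :
    L (a • u + b • w) = a • L u + b • L w := by
  obtain ⟨T, hT⟩ := hL.exists_eq_comp
  rw [hT, hT, hT, ContinuousLinearMap.add_comp, ContinuousLinearMap.smul_comp,
    ContinuousLinearMap.smul_comp]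
end

section
/- Characterization of 𝒮-linearity (necessity): if L : 𝒮'(ℝⁿ) → 𝒮'(ℝᵐ) is an 𝒮-linear operator, then L is the transpose of the continuous linear operator associated with the Schwartz family L∘δ (δ the Dirac family of 𝒮'(ℝⁿ)); i.e., L(u) = u ∘ (L∘δ)̂ for every u ∈ 𝒮'(ℝⁿ). In particular, there exists a continuous linear B : 𝒮(ℝᵐ) → 𝒮(ℝⁿ) with L = ᵗB. -/
open SchwartzMap

/-- The Dirac delta `f ↦ f x` on Schwartz space (as in the older Mathlib's `SchwartzMap.delta`,
since removed). -/
noncomputable def SchwartzMap.delta (𝕜 : Type*) (F : Type*) {E : Type*}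
    [NormedAddCommGroup E] [NormedSpace ℝ E] [NormedAddCommGroup F] [NormedSpace ℝ F]
    [RCLike 𝕜] [NormedSpace 𝕜 F] [SMulCommClass ℝ 𝕜 F] (x : E) : 𝓢(E, F) →L[𝕜] F :=
  (BoundedContinuousFunction.evalCLM 𝕜 x).comp (toBoundedContinuousFunctionCLM 𝕜 E F)

/-- Characterization of 𝒮-linearity (necessity): an 𝒮-linear operator
`L : 𝒮'(ℝⁿ) → 𝒮'(ℝᵐ)` is the transpose of the continuous linear operator
associated with the Schwartz family `L ∘ δ`, where `δ` is the Dirac family: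
there exists a continuous linear `B : 𝒮(ℝᵐ) → 𝒮(ℝⁿ)` with
`B ψ x = L(δₓ)(ψ)` and `L(u) = u ∘ B` for all `u`. -/
theorem isSLinear_necessity {n m : ℕ} (L : TempDist n → TempDist m)
    (hL : IsSLinear L) :
    ∃ B : TestF m →L[ℝ] TestF n,
      (∀ (ψ : TestF m) (x : EuclideanSpace ℝ (Fin n)),
        B ψ x = L (SchwartzMap.delta ℝ ℝ x) ψ) ∧
      ∀ u : TempDist n, L u = u.comp B := by
  obtain ⟨B, hB, hLB⟩ := hL n (SchwartzMap.delta ℝ ℝ) (.id ℝ _) fun _ _ => rfl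
  exact ⟨B, hB, fun u => by simpa only [u.comp_id] using hLB u⟩
end

section
/- Full characterization of 𝒮-linearity: for an operator L : 𝒮'(ℝⁿ) → 𝒮'(ℝᵐ), the following are equivalent: (1) L is 𝒮-linear; (2) there exists a continuous linear B : 𝒮(ℝᵐ) → 𝒮(ℝⁿ) with L = ᵗB (i.e., L(u) = u ∘ B for all u). -/
open SchwartzMap

noncomputable def diracDelta {E F : Type*} [NormedAddCommGroup E] [NormedSpace ℝ E]
    [NormedAddCommGroup F] [NormedSpace ℝ F] (x : E) : 𝓢(E, F) →L[ℝ] F :=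
  (BoundedContinuousFunction.evalCLM ℝ x).comp (toBoundedContinuousFunctionCLM ℝ E F)

theorem isSLinear_transpose {n m : ℕ} (B : TestF m →L[ℝ] TestF n) :
    IsSLinear fun u : TempDist n => u.comp B :=
  fun _ _ vh hvh => ⟨vh.comp B, fun ψ p => hvh (B ψ) p, fun _ => rfl⟩

/-- Testing `𝒮`-linearity on the Dirac family `p ↦ δₚ`, whose operator is the identity, with
coefficient `a = u` gives `L u = u ∘ B` where `B` is the operator of the image family. -/
theorem IsSLinear.exists_transpose {n m : ℕ} {L : TempDist n → TempDist m} (hL : IsSLinear L) :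
    ∃ B : TestF m →L[ℝ] TestF n, ∀ u : TempDist n, L u = u.comp B := by
  obtain ⟨B, -, hB⟩ := hL n diracDelta (.id ℝ (TestF n)) fun _ _ => rfl
  exact ⟨B, fun u => by simpa only [ContinuousLinearMap.comp_id] using hB u⟩

/-- Full characterization of 𝒮-linearity: an operator `L : 𝒮'(ℝⁿ) → 𝒮'(ℝᵐ)` is
𝒮-linear if and only if it is the transpose `ᵗB : u ↦ u ∘ B` of some continuous
linear operator `B : 𝒮(ℝᵐ) → 𝒮(ℝⁿ)`. -/
theorem isSLinear_iff_transpose {n m : ℕ} (L : TempDist n → TempDist m) :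
    IsSLinear L ↔ ∃ B : TestF m →L[ℝ] TestF n, ∀ u : TempDist n, L u = u.comp B := by
  refine ⟨IsSLinear.exists_transpose, ?_⟩
  rintro ⟨B, hB⟩
  obtain rfl : L = fun u => u.comp B := funext hB
  exact isSLinear_transpose B
end
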